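/- Assume the set-valued map K satisfies (H1) and (H2). Then there exists a constant C' > 0, independent of ε and η, such that for every v ∈ ℝ^d, every ε > 0, and every 0 < η ≤ 1: ∫_{ℝ^d} |1^{η,ε}_{K(v)}(x) − 1^{ε}_{K(v)}(x)| dx ≤ C' η. -/

import Mathlib

open MeasureTheory Metric Set Pointwise
noncomputable section

abbrev E (d : ℕ) : Type := EuclideanSpace ℝ (Fin d)

/-- Mollification in both variables of the indicator of a set-valued map `S`:
`1^{η,ε}_{S(v)}(x) := ∫∫ 1_{S(v−w)}(x−y) φ_η(w) ψ_ε(y) dy dw`. -/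
noncomputable def mollInd {d : ℕ} (S : E d → Set (E d)) (φ ψ : E d → ℝ)
    (η ε : ℝ) (v x : E d) : ℝ :=
  ∫ q : E d × E d, Set.indicator (S (v - q.1)) (fun _ => (1:ℝ)) (x - q.2) *
    ((η ^ d)⁻¹ * φ (η⁻¹ • q.1)) * ((ε ^ d)⁻¹ * ψ (ε⁻¹ • q.2))

/-- Mollification in space only: `1^{ε}_{S(v)}(x) := ∫ 1_{S(v)}(x−y) ψ_ε(y) dy`. -/
noncomputable def mollIndX {d : ℕ} (S : E d → Set (E d)) (ψ : E d → ℝ)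
    (ε : ℝ) (v x : E d) : ℝ :=
  ∫ y : E d, Set.indicator (S v) (fun _ => (1:ℝ)) (x - y) * ((ε ^ d)⁻¹ * ψ (ε⁻¹ • y))

section Aux

variable {d : ℕ}

private lemma indicator_ne_mem_symmDiff {A B : Set (E d)} {z : E d}
    (h : A.indicator (fun _ => (1:ℝ)) z ≠ B.indicator (fun _ => (1:ℝ)) z) :
    z ∈ symmDiff A B := by
  by_cases hA : z ∈ A <;> by_cases hB : z ∈ B <;>
    simp_all [Set.indicator_apply, Set.mem_symmDiff]

private lemma abs_indicator_sub (A B : Set (E d)) (z : E d) :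
    |A.indicator (fun _ => (1:ℝ)) z - B.indicator (fun _ => (1:ℝ)) z| =
      (symmDiff A B).indicator (fun _ => (1:ℝ)) z := by
  by_cases hA : z ∈ A <;> by_cases hB : z ∈ B <;>
    simp [Set.indicator_apply, Set.mem_symmDiff, hA, hB]

private lemma closedBall_add_closedBall' (a b : ℝ) :
    closedBall (0 : E d) a + closedBall 0 b ⊆ closedBall 0 (a + b) := by
  rintro x ⟨y, hy, z, hz, rfl⟩
  rw [mem_closedBall_zero_iff] at hy hz ⊢
  exact (norm_add_le y z).trans (add_le_add hy hz)

private lemma moll_supp0 {g : E d → ℝ} (hsupp : Function.support g ⊆ closedBall 0 1)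
    {η : ℝ} (hη : 0 < η) {w : E d} (hw : η < ‖w‖) : g (η⁻¹ • w) = 0 := by
  by_contra h
  have hmem := hsupp (Function.mem_support.2 h)
  rw [mem_closedBall_zero_iff, norm_smul, norm_inv, Real.norm_eq_abs, abs_of_pos hη] at hmem
  have h2 := mul_le_mul_of_nonneg_left hmem hη.le
  rw [← mul_assoc, mul_inv_cancel₀ hη.ne', one_mul, mul_one] at h2
  linarith

private lemma moll_integrable {g : E d → ℝ} (hg : Continuous g)
    (hsupp : Function.support g ⊆ closedBall 0 1) {η : ℝ} (hη : 0 < η) :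
    Integrable (fun w : E d => (η ^ d)⁻¹ * g (η⁻¹ • w)) := by
  refine Integrable.const_mul ?_ _
  refine (hg.comp (continuous_const_smul _)).integrable_of_hasCompactSupport ?_
  refine HasCompactSupport.intro (isCompact_closedBall (0 : E d) η) ?_
  intro w hw
  rw [mem_closedBall_zero_iff, not_le] at hw
  exact moll_supp0 hsupp hη hw

private lemma moll_integral {g : E d → ℝ} (hg : Continuous g)
    (hsupp : Function.support g ⊆ closedBall 0 1)
    (hint : ∫ x, g x = 1) {η : ℝ} (hη : 0 < η) :
    ∫ w, (η ^ d)⁻¹ * g (η⁻¹ • w) = 1 := by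
  rw [integral_const_mul, Measure.integral_comp_inv_smul_of_nonneg volume g hη.le,
    finrank_euclideanSpace_fin, hint, smul_eq_mul, mul_one]
  exact inv_mul_cancel₀ (pow_ne_zero _ hη.ne')

private lemma moll_lintegral {g : E d → ℝ} (hg : Continuous g)
    (hsupp : Function.support g ⊆ closedBall 0 1) (hnn : ∀ x, 0 ≤ g x)
    (hint : ∫ x, g x = 1) {η : ℝ} (hη : 0 < η) :
    ∫⁻ w, ENNReal.ofReal ((η ^ d)⁻¹ * g (η⁻¹ • w)) = 1 := by
  rw [← ofReal_integral_eq_lintegral_ofReal (moll_integrable hg hsupp hη)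
    (ae_of_all _ fun w => mul_nonneg (by positivity) (hnn _)),
    moll_integral hg hsupp hint hη, ENNReal.ofReal_one]

private lemma thick_bound {Θ : E d → Set (E d)} {C : ℝ} (hC : 0 < C)
    (h2ii : ∀ v, ∀ ε ∈ Set.Ioo (0:ℝ) 1,
      volume (Θ v + closedBall (0 : E d) ε) ≤ ENNReal.ofReal (C * ε))
    (u : E d) {r : ℝ} (hr : 0 < r) (hr1 : r < 1) :
    volume (Θ u + closedBall (0 : E d) r) ≤ ENNReal.ofReal (C * r) := by
  refine ENNReal.le_of_forall_pos_le_add fun δ hδ _ => ?_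
  have hδR : (0:ℝ) < δ := hδ
  set r' : ℝ := min ((r + 1) / 2) (r + δ / C) with hr'
  have h1 : r < r' := lt_min (by linarith) (by
    have := div_pos hδR hC; linarith)
  have h2 : r' < 1 := (min_le_left _ _).trans_lt (by linarith)
  have h3 : 0 < r' := hr.trans h1
  have hCr : C * r' ≤ C * r + δ := by
    have hm : r' ≤ r + δ / C := min_le_right _ _
    have := mul_le_mul_of_nonneg_left hm hC.le
    rw [mul_add] at this
    have hcc : C * (δ / C) = δ := by field_simp
    linarith
  calc volume (Θ u + closedBall 0 r) ≤ volume (Θ u + closedBall 0 r') :=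
        measure_mono (add_subset_add_left (closedBall_subset_closedBall h1.le))
    _ ≤ ENNReal.ofReal (C * r') := h2ii u r' ⟨h3, h2⟩
    _ ≤ ENNReal.ofReal (C * r + δ) := ENNReal.ofReal_le_ofReal hCr
    _ ≤ ENNReal.ofReal (C * r) + ENNReal.ofReal δ := ENNReal.ofReal_add_le
    _ = ENNReal.ofReal (C * r) + δ := by rw [ENNReal.ofReal_coe_nnreal]

private lemma aesm_key (K Θ : E d → Set (E d)) (C : ℝ) (hC : 0 < C)
    (hKcl : ∀ v, IsClosed (K v)) (hΘcl : ∀ v, IsClosed (Θ v))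
    (h2ii : ∀ v, ∀ ε ∈ Set.Ioo (0:ℝ) 1,
      volume (Θ v + closedBall (0 : E d) ε) ≤ ENNReal.ofReal (C * ε))
    (h2iii : ∀ v w, symmDiff (K v) (K w) ⊆ Θ v + closedBall (0 : E d) (C * ‖v - w‖))
    (h2iv : ∀ v w, Θ w ⊆ Θ v + closedBall (0 : E d) (C * ‖v - w‖))
    (v : E d) (Φ Ψ : E d → ℝ) (hΦc : Continuous Φ) (hΨc : Continuous Ψ)
    {η ε : ℝ} (hη : 0 < η) (hε : 0 < ε)
    (hΦ0 : ∀ w, η < ‖w‖ → Φ w = 0) (hΨ0 : ∀ y, ε < ‖y‖ → Ψ y = 0) :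
    AEStronglyMeasurable (fun p : E d × E d × E d =>
      Set.indicator (K (v - p.2.1)) (fun _ => (1:ℝ)) (p.1 - p.2.2) * Φ p.2.1 * Ψ p.2.2)
      volume := by
  classical
  set u : ℕ → E d := TopologicalSpace.denseSeq (E d) with hu
  have hdense : DenseRange u := TopologicalSpace.denseRange_denseSeq (E d)
  set ρ : ℕ → ℝ := fun n => (2:ℝ)⁻¹ ^ (n + 1) with hρ
  have hρpos : ∀ n, 0 < ρ n := fun n => pow_pos (by norm_num) _
  have hρlt1 : ∀ n, ρ n < 1 := by
    intro n
    have : ((2:ℝ)⁻¹) ^ (n+1) ≤ (2:ℝ)⁻¹ ^ 1 :=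
      pow_le_pow_of_le_one (by norm_num) (by norm_num) (by omega)
    simpa [hρ] using this.trans_lt (by norm_num)
  set δ : ℕ → ℝ := fun n => ρ n / (2 * C) with hδ
  have hδpos : ∀ n, 0 < δ n := fun n => div_pos (hρpos n) (by positivity)
  have hex : ∀ (n : ℕ) (w : E d), ∃ k, dist w (u k) < δ n := fun n w =>
    Metric.denseRange_iff.1 hdense w _ (hδpos n)
  set s : ℕ → E d → E d := fun n w => u (Nat.find (hex n w)) with hs
  have hsdist : ∀ n w, dist w (s n w) < δ n := fun n w => Nat.find_spec (hex n w)
  have hkmeas : ∀ n, Measurable fun w => Nat.find (hex n w) := fun n =>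
    measurable_find _ (fun _ => measurableSet_ball)
  have hmeas_gen : ∀ (n : ℕ) (T : E d → Set (E d)), (∀ c, MeasurableSet (T c)) →
      MeasurableSet {p : E d × E d × E d | p.1 - p.2.2 ∈ T (s n p.2.1)} := by
    intro n T hT
    have heq : {p : E d × E d × E d | p.1 - p.2.2 ∈ T (s n p.2.1)} =
        ⋃ k : ℕ, ((fun p : E d × E d × E d => Nat.find (hex n p.2.1)) ⁻¹' {k}) ∩
          ((fun p : E d × E d × E d => p.1 - p.2.2) ⁻¹' T (u k)) := by
      ext p
      simp only [Set.mem_iUnion, Set.mem_inter_iff, Set.mem_preimage, Set.mem_singleton_iff,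
        Set.mem_setOf_eq]
      constructor
      · intro h; exact ⟨_, rfl, h⟩
      · rintro ⟨k, hk, h⟩
        have : s n p.2.1 = u k := by rw [hs]; simp [hk]
        rw [this]; exact h
    rw [heq]
    refine MeasurableSet.iUnion fun k => MeasurableSet.inter ?_ ?_
    · exact ((hkmeas n).comp (measurable_fst.comp measurable_snd)) (measurableSet_singleton k)
    · exact (continuous_fst.sub (continuous_snd.comp continuous_snd)).measurable (hT (u k))
  set F : (E d × E d × E d) → ℝ := fun p =>
    Set.indicator (K (v - p.2.1)) (fun _ => (1:ℝ)) (p.1 - p.2.2) * Φ p.2.1 * Ψ p.2.2 with hF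
  set Fm : ℕ → (E d × E d × E d) → ℝ := fun n p =>
    Set.indicator (K (v - s n p.2.1)) (fun _ => (1:ℝ)) (p.1 - p.2.2) * Φ p.2.1 * Ψ p.2.2 with hFm
  have hFmm : ∀ n, AEStronglyMeasurable (Fm n) volume := by
    intro n
    have h1 : MeasurableSet {p : E d × E d × E d | p.1 - p.2.2 ∈ K (v - s n p.2.1)} :=
      hmeas_gen n (fun c => K (v - c)) (fun c => (hKcl _).measurableSet)
    have heq : Fm n = fun p =>
        Set.indicator {p : E d × E d × E d | p.1 - p.2.2 ∈ K (v - s n p.2.1)}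
          (fun _ => (1:ℝ)) p * Φ p.2.1 * Ψ p.2.2 := by
      funext p
      by_cases h : p.1 - p.2.2 ∈ K (v - s n p.2.1) <;>
        simp [hFm, Set.indicator_apply, h]
    rw [heq]
    exact (((measurable_const.indicator h1).mul
      ((hΦc.comp (continuous_fst.comp continuous_snd)).measurable)).mul
      ((hΨc.comp (continuous_snd.comp continuous_snd)).measurable)).aestronglyMeasurable
  set N : ℕ → Set (E d × E d × E d) := fun n =>
    {p | ‖p.2.1‖ ≤ η ∧ ‖p.2.2‖ ≤ ε ∧
      p.1 - p.2.2 ∈ Θ (v - s n p.2.1) + closedBall 0 (ρ n)} with hN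
  have hNmeas : ∀ n, MeasurableSet (N n) := by
    intro n
    have h3 : MeasurableSet {p : E d × E d × E d |
        p.1 - p.2.2 ∈ Θ (v - s n p.2.1) + closedBall 0 (ρ n)} :=
      hmeas_gen n (fun c => Θ (v - c) + closedBall 0 (ρ n)) (fun c =>
        ((hΘcl _).add_right_of_isCompact (isCompact_closedBall _ _)).measurableSet)
    have heq : N n = ((fun p : E d × E d × E d => p.2.1) ⁻¹' closedBall 0 η) ∩
        (((fun p : E d × E d × E d => p.2.2) ⁻¹' closedBall 0 ε) ∩
         {p : E d × E d × E d | p.1 - p.2.2 ∈ Θ (v - s n p.2.1) + closedBall 0 (ρ n)}) := by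
      ext p
      simp [hN, mem_closedBall_zero_iff, and_assoc]
    rw [heq]
    exact (((continuous_fst.comp continuous_snd).measurable) measurableSet_closedBall).inter
      ((((continuous_snd.comp continuous_snd).measurable) measurableSet_closedBall).inter h3)
  have hμN : ∀ n, volume (N n) ≤ ENNReal.ofReal (C * ρ n) *
      volume (closedBall (0 : E d) η ×ˢ closedBall (0 : E d) ε) := by
    intro n
    rw [show (volume : Measure (E d × E d × E d)) =
      (volume : Measure (E d)).prod (volume : Measure (E d × E d)) from rfl]
    rw [Measure.prod_apply_symm (hNmeas n)]
    calc ∫⁻ q, volume ((fun x => (x, q)) ⁻¹' N n) ∂(volume : Measure (E d × E d))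
        ≤ ∫⁻ q, (closedBall (0:E d) η ×ˢ closedBall (0:E d) ε).indicator
            (fun _ => ENNReal.ofReal (C * ρ n)) q ∂(volume : Measure (E d × E d)) := by
          refine lintegral_mono fun q => ?_
          by_cases hq : q ∈ closedBall (0:E d) η ×ˢ closedBall (0:E d) ε
          · rw [Set.indicator_of_mem hq]
            have hsub : (fun x => (x, q)) ⁻¹' N n ⊆
                (fun x : E d => x + (-q.2)) ⁻¹' (Θ (v - s n q.1) + closedBall 0 (ρ n)) := by
              intro x hx
              have := hx.2.2
              simpa [sub_eq_add_neg] using this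
            refine le_trans (measure_mono hsub) ?_
            rw [measure_preimage_add_right]
            exact thick_bound hC h2ii _ (hρpos n) (hρlt1 n)
          · have hempty : (fun x => (x, q)) ⁻¹' N n = ∅ := by
              ext x
              simp only [Set.mem_preimage, Set.mem_empty_iff_false, iff_false]
              intro hx
              exact hq (Set.mem_prod.2 ⟨mem_closedBall_zero_iff.2 hx.1,
                mem_closedBall_zero_iff.2 hx.2.1⟩)
            simp [hempty]
      _ = ENNReal.ofReal (C * ρ n) *
            volume (closedBall (0 : E d) η ×ˢ closedBall (0 : E d) ε) :=
          lintegral_indicator_const (measurableSet_closedBall.prod measurableSet_closedBall) _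
  have hsum : ∑' n, volume (N n) ≠ ⊤ := by
    have hV : volume (closedBall (0 : E d) η ×ˢ closedBall (0 : E d) ε) ≠ ⊤ := by
      rw [show (volume : Measure (E d × E d)) =
        (volume : Measure (E d)).prod (volume : Measure (E d)) from rfl, Measure.prod_prod]
      exact (ENNReal.mul_lt_top measure_closedBall_lt_top measure_closedBall_lt_top).ne
    refine ne_top_of_le_ne_top ?_ (ENNReal.tsum_le_tsum fun n => hμN n)
    rw [ENNReal.tsum_mul_right]
    refine ENNReal.mul_ne_top ?_ hV
    have hsummable : Summable fun n : ℕ => C * ρ n := by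
      have : Summable fun n : ℕ => ((2:ℝ)⁻¹) ^ n :=
        summable_geometric_of_lt_one (by norm_num) (by norm_num)
      have h2 : Summable fun n : ℕ => ((2:ℝ)⁻¹) ^ (n + 1) := by
        simpa [pow_succ] using this.mul_right (2:ℝ)⁻¹
      exact h2.mul_left C
    rw [← ENNReal.ofReal_tsum_of_nonneg (fun n => by positivity) hsummable]
    exact ENNReal.ofReal_ne_top
  have hlimsup : volume (Filter.limsup N Filter.atTop) = 0 :=
    measure_limsup_atTop_eq_zero hsum
  have hae : ∀ᵐ p : E d × E d × E d, Filter.Tendsto (fun n => Fm n p) Filter.atTop (nhds (F p)) := by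
    have hcompl : ∀ᵐ p : E d × E d × E d, p ∉ Filter.limsup N Filter.atTop :=
      measure_eq_zero_iff_ae_notMem.mp hlimsup
    filter_upwards [hcompl] with p hp
    by_cases hw : ‖p.2.1‖ ≤ η
    swap
    · have h0 : Φ p.2.1 = 0 := hΦ0 _ (lt_of_not_ge hw)
      have : ∀ n, Fm n p = F p := by intro n; simp [hFm, hF, h0]
      simp only [this]
      exact tendsto_const_nhds
    by_cases hy : ‖p.2.2‖ ≤ ε
    swap
    · have h0 : Ψ p.2.2 = 0 := hΨ0 _ (lt_of_not_ge hy)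
      have : ∀ n, Fm n p = F p := by intro n; simp [hFm, hF, h0]
      simp only [this]
      exact tendsto_const_nhds
    have hev : ∃ n₀, ∀ m, n₀ ≤ m → p ∉ N m := by
      by_contra hcon
      push_neg at hcon
      refine hp ?_
      simp only [Filter.limsup_eq_iInf_iSup_of_nat, Set.iInf_eq_iInter, Set.mem_iInter,
        Set.iSup_eq_iUnion, Set.mem_iUnion]
      intro n
      obtain ⟨m, hm, hmem⟩ := hcon n
      exact ⟨m, hm, hmem⟩
    obtain ⟨n₀, hn₀⟩ := hev
    have heq : ∀ m, n₀ ≤ m → Fm m p = F p := by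
      intro m hm
      have hind : Set.indicator (K (v - s m p.2.1)) (fun _ => (1:ℝ)) (p.1 - p.2.2) =
          Set.indicator (K (v - p.2.1)) (fun _ => (1:ℝ)) (p.1 - p.2.2) := by
        by_contra hne
        have hz : p.1 - p.2.2 ∈ symmDiff (K (v - p.2.1)) (K (v - s m p.2.1)) := by
          have := indicator_ne_mem_symmDiff hne
          rwa [symmDiff_comm] at this
        have hw1 : ‖(v - p.2.1) - (v - s m p.2.1)‖ ≤ δ m := by
          have : (v - p.2.1) - (v - s m p.2.1) = s m p.2.1 - p.2.1 := by abel
          rw [this, norm_sub_rev, ← dist_eq_norm]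
          exact (hsdist m p.2.1).le
        have hw2 : ‖(v - s m p.2.1) - (v - p.2.1)‖ ≤ δ m := by
          have : (v - s m p.2.1) - (v - p.2.1) = p.2.1 - s m p.2.1 := by abel
          rw [this, ← dist_eq_norm]
          exact (hsdist m p.2.1).le
        have hCδ : C * δ m ≤ ρ m / 2 := by
          rw [hδ]
          have : C * (ρ m / (2 * C)) = ρ m / 2 := by field_simp
          simp only [this]
          exact le_refl _
        have hstep1 : p.1 - p.2.2 ∈ Θ (v - p.2.1) + closedBall 0 (ρ m / 2) := by
          have h1 := h2iii (v - p.2.1) (v - s m p.2.1) hz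
          refine add_subset_add_left (closedBall_subset_closedBall ?_) h1
          calc C * ‖(v - p.2.1) - (v - s m p.2.1)‖ ≤ C * δ m :=
                mul_le_mul_of_nonneg_left hw1 hC.le
            _ ≤ ρ m / 2 := hCδ
        have hstep2 : Θ (v - p.2.1) ⊆ Θ (v - s m p.2.1) + closedBall 0 (ρ m / 2) := by
          refine (h2iv (v - s m p.2.1) (v - p.2.1)).trans
            (add_subset_add_left (closedBall_subset_closedBall ?_))
          calc C * ‖(v - s m p.2.1) - (v - p.2.1)‖ ≤ C * δ m :=
                mul_le_mul_of_nonneg_left hw2 hC.le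
            _ ≤ ρ m / 2 := hCδ
        have hmem : p.1 - p.2.2 ∈ Θ (v - s m p.2.1) + closedBall 0 (ρ m) := by
          have h4 := (add_subset_add_right hstep2) hstep1
          rw [add_assoc] at h4
          have h5 : closedBall (0 : E d) (ρ m / 2) + closedBall 0 (ρ m / 2) ⊆
              closedBall 0 (ρ m) := by
            refine (closedBall_add_closedBall' _ _).trans ?_
            rw [add_halves]
          exact (add_subset_add_left h5) h4
        exact hn₀ m hm ⟨hw, hy, hmem⟩
      simp [hFm, hF, hind]
    refine Filter.Tendsto.congr' ?_ tendsto_const_nhds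
    exact Filter.eventually_atTop.2 ⟨n₀, fun m hm => (heq m hm).symm⟩
  exact aestronglyMeasurable_of_tendsto_ae Filter.atTop hFmm hae

end Aux

/-- Under (H1)–(H2), there is a constant `C' > 0` independent of
`ε` and `η` such that for all `v`, all `ε > 0` and all `0 < η ≤ 1`,
`∫ |1^{η,ε}_{K(v)}(x) − 1^{ε}_{K(v)}(x)| dx ≤ C' η`. -/
theorem stmt12 {d : ℕ} (K Θ : E d → Set (E d)) (𝒦 : Set (E d)) (C : ℝ)
    (hKne : ∀ v, (K v).Nonempty) (hKcp : ∀ v, IsCompact (K v))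
    (h𝒦 : IsCompact 𝒦) (hKsub : ∀ v, K v ⊆ 𝒦)
    (hΘcl : ∀ v, IsClosed (Θ v)) (hC : 0 < C)
    (h2i : ∀ v, frontier (K v) ⊆ Θ v)
    (h2ii : ∀ v, ∀ ε ∈ Set.Ioo (0:ℝ) 1,
      volume (Θ v + closedBall (0 : E d) ε) ≤ ENNReal.ofReal (C * ε))
    (h2iii : ∀ v w, symmDiff (K v) (K w) ⊆ Θ v + closedBall (0 : E d) (C * ‖v - w‖))
    (h2iv : ∀ v w, Θ w ⊆ Θ v + closedBall (0 : E d) (C * ‖v - w‖))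
    (φ ψ : E d → ℝ)
    (hφsm : ContDiff ℝ (⊤ : ℕ∞) φ) (hφnn : ∀ x, 0 ≤ φ x) (hφeven : ∀ x, φ (-x) = φ x)
    (hφsupp : Function.support φ ⊆ closedBall 0 1) (hφint : ∫ x, φ x = 1)
    (hψsm : ContDiff ℝ (⊤ : ℕ∞) ψ) (hψnn : ∀ x, 0 ≤ ψ x) (hψeven : ∀ x, ψ (-x) = ψ x)
    (hψsupp : Function.support ψ ⊆ closedBall 0 1) (hψint : ∫ x, ψ x = 1) :
    ∃ C' > 0, ∀ (v : E d) (ε η : ℝ), 0 < ε → 0 < η → η ≤ 1 →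
      ∫⁻ x, ENNReal.ofReal |mollInd K φ ψ η ε v x - mollIndX K ψ ε v x| ≤
        ENNReal.ofReal (C' * η) := by
  classical
  have hMne : volume 𝒦 ≠ ⊤ := h𝒦.measure_lt_top.ne
  set M : ℝ := (volume 𝒦).toReal with hMdef
  have hM0 : 0 ≤ M := ENNReal.toReal_nonneg
  refine ⟨C * C + C * M + 1, by positivity, ?_⟩
  intro v ε η hε hη hη1
  set Φ : E d → ℝ := fun w => ((η:ℝ) ^ d)⁻¹ * φ (η⁻¹ • w) with hΦdef
  set Ψ : E d → ℝ := fun y => ((ε:ℝ) ^ d)⁻¹ * ψ (ε⁻¹ • y) with hΨdef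
  have hΦc : Continuous Φ := continuous_const.mul (hφsm.continuous.comp (continuous_const_smul _))
  have hΨc : Continuous Ψ := continuous_const.mul (hψsm.continuous.comp (continuous_const_smul _))
  have hΦnn : ∀ w, 0 ≤ Φ w := fun w => mul_nonneg (by positivity) (hφnn _)
  have hΨnn : ∀ y, 0 ≤ Ψ y := fun y => mul_nonneg (by positivity) (hψnn _)
  have hΦ0 : ∀ w, η < ‖w‖ → Φ w = 0 := by
    intro w hw
    simp only [hΦdef]
    rw [moll_supp0 hφsupp hη hw, mul_zero]
  have hΨ0 : ∀ y, ε < ‖y‖ → Ψ y = 0 := by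
    intro y hy
    simp only [hΨdef]
    rw [moll_supp0 hψsupp hε hy, mul_zero]
  have hΦint : Integrable Φ := moll_integrable hφsm.continuous hφsupp hη
  have hΨint : Integrable Ψ := moll_integrable hψsm.continuous hψsupp hε
  have hΦ1 : ∫ w, Φ w = 1 := moll_integral hφsm.continuous hφsupp hφint hη
  have hΦl : ∫⁻ w, ENNReal.ofReal (Φ w) = 1 :=
    moll_lintegral hφsm.continuous hφsupp hφnn hφint hη
  have hΨl : ∫⁻ y, ENNReal.ofReal (Ψ y) = 1 :=
    moll_lintegral hψsm.continuous hψsupp hψnn hψint hε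
  set F : (E d × E d × E d) → ℝ := fun p =>
    Set.indicator (K (v - p.2.1)) (fun _ => (1:ℝ)) (p.1 - p.2.2) * Φ p.2.1 * Ψ p.2.2 with hFdef
  set G : (E d × E d × E d) → ℝ := fun p =>
    Set.indicator (K v) (fun _ => (1:ℝ)) (p.1 - p.2.2) * Φ p.2.1 * Ψ p.2.2 with hGdef
  have hKcl : ∀ w, IsClosed (K w) := fun w => (hKcp w).isClosed
  have hFsm : AEStronglyMeasurable F volume :=
    aesm_key K Θ C hC hKcl hΘcl h2ii h2iii h2iv v Φ Ψ hΦc hΨc hη hε hΦ0 hΨ0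
  have hGsm : Measurable G := by
    have h1 : MeasurableSet {p : E d × E d × E d | p.1 - p.2.2 ∈ K v} :=
      (continuous_fst.sub (continuous_snd.comp continuous_snd)).measurable (hKcl v).measurableSet
    have heq : G = fun p => Set.indicator {p : E d × E d × E d | p.1 - p.2.2 ∈ K v}
        (fun _ => (1:ℝ)) p * Φ p.2.1 * Ψ p.2.2 := by
      funext p
      by_cases h : p.1 - p.2.2 ∈ K v <;> simp [hGdef, Set.indicator_apply, h]
    rw [heq]
    exact ((measurable_const.indicator h1).mul
      ((hΦc.comp (continuous_fst.comp continuous_snd)).measurable)).mul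
      ((hΨc.comp (continuous_snd.comp continuous_snd)).measurable)
  have hbound : ∀ (A : Set (E d)) (x : E d) (q : E d × E d),
      ‖A.indicator (fun _ => (1:ℝ)) (x - q.2) * Φ q.1 * Ψ q.2‖ ≤ Φ q.1 * Ψ q.2 := by
    intro A x q
    rw [Real.norm_eq_abs, abs_mul, abs_mul, abs_of_nonneg (hΦnn _), abs_of_nonneg (hΨnn _)]
    have hind : |A.indicator (fun _ => (1:ℝ)) (x - q.2)| ≤ 1 := by
      by_cases h : x - q.2 ∈ A <;> simp [Set.indicator_apply, h]
    calc |A.indicator (fun _ => (1:ℝ)) (x - q.2)| * Φ q.1 * Ψ q.2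
        ≤ 1 * Φ q.1 * Ψ q.2 :=
          mul_le_mul_of_nonneg_right (mul_le_mul_of_nonneg_right hind (hΦnn _)) (hΨnn _)
      _ = Φ q.1 * Ψ q.2 := by rw [one_mul]
  have hΦΨint : Integrable (fun q : E d × E d => Φ q.1 * Ψ q.2) volume := by
    rw [Measure.volume_eq_prod]
    exact hΦint.mul_prod hΨint
  have hGint : ∀ x : E d, Integrable (fun q : E d × E d => G (x, q)) volume := by
    intro x
    have hm : AEStronglyMeasurable (fun q : E d × E d => G (x, q)) volume :=
      (hGsm.comp measurable_prodMk_left).aestronglyMeasurable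
    exact Integrable.mono' hΦΨint hm (ae_of_all _ fun q => hbound (K v) x q)
  have hFsec : ∀ᵐ x : E d, AEStronglyMeasurable (fun q : E d × E d => F (x, q)) volume := by
    have h := hFsm
    rw [Measure.volume_eq_prod] at h
    exact AEStronglyMeasurable.prodMk_left h
  have hFint : ∀ᵐ x : E d, Integrable (fun q : E d × E d => F (x, q)) volume := by
    filter_upwards [hFsec] with x hx
    exact Integrable.mono' hΦΨint hx (ae_of_all _ fun q => hbound (K (v - q.1)) x q)
  have hmX : ∀ x : E d, mollIndX K ψ ε v x = ∫ q : E d × E d, G (x, q) := by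
    intro x
    have heq : (fun q : E d × E d => G (x, q)) = fun q : E d × E d =>
        Φ q.1 * ((K v).indicator (fun _ => (1:ℝ)) (x - q.2) * Ψ q.2) := by
      funext q
      simp only [hGdef]
      ring
    rw [heq, Measure.volume_eq_prod,
      integral_prod_mul Φ (fun y : E d => (K v).indicator (fun _ => (1:ℝ)) (x - y) * Ψ y),
      hΦ1, one_mul]
    rfl
  have hmI : ∀ x : E d, mollInd K φ ψ η ε v x = ∫ q : E d × E d, F (x, q) := fun x => rfl
  have key : ∀ᵐ x : E d, ENNReal.ofReal |mollInd K φ ψ η ε v x - mollIndX K ψ ε v x| ≤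
      ∫⁻ q : E d × E d, ENNReal.ofReal |F (x, q) - G (x, q)| := by
    filter_upwards [hFint] with x hFi
    rw [hmI x, hmX x, ← integral_sub hFi (hGint x)]
    calc ENNReal.ofReal |∫ q : E d × E d, (F (x, q) - G (x, q))|
        ≤ ENNReal.ofReal (∫ q : E d × E d, |F (x, q) - G (x, q)|) := by
          refine ENNReal.ofReal_le_ofReal ?_
          exact norm_integral_le_integral_norm (fun q : E d × E d => F (x, q) - G (x, q))
      _ = ∫⁻ q : E d × E d, ENNReal.ofReal |F (x, q) - G (x, q)| :=
          ofReal_integral_eq_lintegral_ofReal (hFi.sub (hGint x)).abs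
            (ae_of_all _ fun q => abs_nonneg _)
  have hΔmeas : ∀ w : E d, MeasurableSet (symmDiff (K (v - w)) (K v)) :=
    fun w => ((hKcl _).measurableSet.symmDiff (hKcl v).measurableSet)
  have hpt : ∀ (x : E d) (q : E d × E d), ENNReal.ofReal |F (x, q) - G (x, q)| =
      (symmDiff (K (v - q.1)) (K v)).indicator
        (fun _ => ENNReal.ofReal (Φ q.1 * Ψ q.2)) (x - q.2) := by
    intro x q
    have h1 : F (x, q) - G (x, q) =
        ((K (v - q.1)).indicator (fun _ => (1:ℝ)) (x - q.2) -
          (K v).indicator (fun _ => (1:ℝ)) (x - q.2)) * (Φ q.1 * Ψ q.2) := by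
      simp only [hFdef, hGdef]
      ring
    rw [h1, abs_mul, abs_indicator_sub, abs_of_nonneg (mul_nonneg (hΦnn _) (hΨnn _))]
    by_cases h : (x - q.2) ∈ symmDiff (K (v - q.1)) (K v) <;>
      simp [Set.indicator_apply, h]
  have main_est : ∀ B : ENNReal,
      (∀ w : E d, ‖w‖ ≤ η → volume (symmDiff (K (v - w)) (K v)) ≤ B) →
      ∫⁻ x, ENNReal.ofReal |mollInd K φ ψ η ε v x - mollIndX K ψ ε v x| ≤ B := by
    intro B hB
    have hm : AEMeasurable (fun p : E d × E d × E d => ENNReal.ofReal |F p - G p|)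
        ((volume : Measure (E d)).prod (volume : Measure (E d × E d))) := by
      have h1 : AEStronglyMeasurable (fun p : E d × E d × E d => ‖F p - G p‖) volume :=
        (hFsm.sub hGsm.aestronglyMeasurable).norm
      have h2 : AEMeasurable (fun p : E d × E d × E d => ENNReal.ofReal |F p - G p|) volume := by
        have h3 := ENNReal.measurable_ofReal.comp_aemeasurable h1.aemeasurable
        simp only [Real.norm_eq_abs] at h3; exact h3
      rwa [Measure.volume_eq_prod] at h2
    calc ∫⁻ x, ENNReal.ofReal |mollInd K φ ψ η ε v x - mollIndX K ψ ε v x|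
        ≤ ∫⁻ x, ∫⁻ q : E d × E d, ENNReal.ofReal |F (x, q) - G (x, q)| :=
          lintegral_mono_ae key
      _ = ∫⁻ q : E d × E d, ∫⁻ x, ENNReal.ofReal |F (x, q) - G (x, q)| :=
          lintegral_lintegral_swap hm
      _ ≤ ∫⁻ q : E d × E d, B * (ENNReal.ofReal (Φ q.1) * ENNReal.ofReal (Ψ q.2)) := by
          refine lintegral_mono fun q => ?_
          have h1 : ∫⁻ x, ENNReal.ofReal |F (x, q) - G (x, q)| =
              volume (symmDiff (K (v - q.1)) (K v)) * ENNReal.ofReal (Φ q.1 * Ψ q.2) := by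
            simp_rw [hpt]
            have h2 : ∀ x : E d, (symmDiff (K (v - q.1)) (K v)).indicator
                (fun _ => ENNReal.ofReal (Φ q.1 * Ψ q.2)) (x - q.2) =
                (symmDiff (K (v - q.1)) (K v)).indicator
                (fun _ => ENNReal.ofReal (Φ q.1 * Ψ q.2)) (x + (-q.2)) := by
              intro x
              rw [sub_eq_add_neg x q.2]
            simp_rw [h2]
            rw [lintegral_add_right_eq_self (fun z => (symmDiff (K (v - q.1)) (K v)).indicator
              (fun _ => ENNReal.ofReal (Φ q.1 * Ψ q.2)) z) (-q.2)]
            rw [lintegral_indicator_const (hΔmeas q.1), mul_comm]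
          rw [h1]
          by_cases hq : Φ q.1 = 0
          · simp [hq]
          · have hq1 : ‖q.1‖ ≤ η := by
              by_contra hcon
              exact hq (hΦ0 _ (lt_of_not_ge hcon))
            rw [ENNReal.ofReal_mul (hΦnn _)]
            exact mul_le_mul' (hB q.1 hq1) le_rfl
      _ = B * ∫⁻ q : E d × E d, ENNReal.ofReal (Φ q.1) * ENNReal.ofReal (Ψ q.2) :=
          lintegral_const_mul B ((ENNReal.measurable_ofReal.comp
            (hΦc.measurable.comp measurable_fst)).mul
            (ENNReal.measurable_ofReal.comp (hΨc.measurable.comp measurable_snd)))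
      _ = B * ((∫⁻ w, ENNReal.ofReal (Φ w)) * (∫⁻ y, ENNReal.ofReal (Ψ y))) := by
          congr 1
          rw [Measure.volume_eq_prod]
          exact lintegral_prod_mul
            (ENNReal.measurable_ofReal.comp_aemeasurable hΦc.measurable.aemeasurable)
            (ENNReal.measurable_ofReal.comp_aemeasurable hΨc.measurable.aemeasurable)
      _ = B := by rw [hΦl, hΨl, one_mul, mul_one]
  rcases lt_or_ge (C * η) 1 with hsm | hlg
  · refine (main_est (ENNReal.ofReal (C * (C * η))) ?_).trans ?_
    · intro w hw
      have hsub : symmDiff (K (v - w)) (K v) ⊆ Θ v + closedBall 0 (C * η) := by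
        have h1 := h2iii v (v - w)
        rw [symmDiff_comm]
        refine h1.trans (add_subset_add_left (closedBall_subset_closedBall ?_))
        have h2 : ‖v - (v - w)‖ = ‖w‖ := by rw [sub_sub_cancel]
        rw [h2]
        exact mul_le_mul_of_nonneg_left hw hC.le
      exact (measure_mono hsub).trans (thick_bound hC h2ii v (by positivity) hsm)
    · refine ENNReal.ofReal_le_ofReal ?_
      have h3 : C * (C * η) = (C * C) * η := by ring
      rw [h3]
      have h1 : C * C ≤ C * C + C * M + 1 := by nlinarith
      exact mul_le_mul_of_nonneg_right h1 hη.le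
  · refine (main_est (volume 𝒦) ?_).trans ?_
    · intro w _
      refine measure_mono (symmDiff_subset_union.trans ?_)
      exact Set.union_subset (hKsub _) (hKsub _)
    · rw [← ENNReal.ofReal_toReal hMne, ← hMdef]
      refine ENNReal.ofReal_le_ofReal ?_
      have h2 : M * 1 ≤ M * (C * η) := mul_le_mul_of_nonneg_left hlg hM0
      nlinarith [mul_nonneg (mul_nonneg hC.le hC.le) hη.le, hη.le]
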